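/- Let 𝒜 have size q ≥ 2, let n ≥ 2, let i, j ∈ {1,…,n} be distinct, and let A, B be nonempty subsets of 𝒜. Then the (A,B,i,j)-quasi cross is a λ₁(n,q)-eigenfunction of H(n,q) if and only if |A| = |B|. -/

import Mathlib

/-- `f` is a `lam`-eigenfunction of `G`: for every vertex `x` the sum of `f` over the
neighbors of `x` equals `lam * f x` (the all-zero function is allowed). -/
def IsEigenfun {V : Type*} (G : SimpleGraph V) [Fintype V] (lam : ℝ) (f : V → ℝ) : Prop :=
  ∀ x : V, ∑ y : V, (G.neighborSet x).indicator f y = lam * f x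

/-- The Hamming graph `H(n,q)` on the vertex set `𝒜ⁿ` (where `|𝒜| = q`): two vertices are
adjacent iff they differ in exactly one coordinate. -/
def hammingGraph (n : ℕ) (𝒜 : Type*) [DecidableEq 𝒜] : SimpleGraph (Fin n → 𝒜) where
  Adj x y := hammingDist x y = 1
  symm := ⟨fun x y h => by simpa [hammingDist_comm] using h⟩
  loopless := ⟨fun x h => by simp [hammingDist_self] at h⟩

open scoped Classical in
/-- The `(A,B,i)`-quasi string: value `1` if `x i ∈ A`, value `-1` if `x i ∈ B`,
and `0` otherwise. -/
noncomputable def quasiString {n : ℕ} {𝒜 : Type*} (A B : Set 𝒜) (i : Fin n) :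
    (Fin n → 𝒜) → ℝ :=
  fun x => if x i ∈ A then 1 else if x i ∈ B then -1 else 0

open scoped Classical in
/-- The `(A,B,i,j)`-quasi cross: value `1` if `x i ∈ A` and `x j ∉ B`, value `-1` if
`x i ∉ A` and `x j ∈ B`, and `0` otherwise. -/
noncomputable def quasiCross {n : ℕ} {𝒜 : Type*} (A B : Set 𝒜) (i j : Fin n) :
    (Fin n → 𝒜) → ℝ :=
  fun x => if x i ∈ A ∧ x j ∉ B then 1 else if x i ∉ A ∧ x j ∈ B then -1 else 0

open Finset Function

/-! The quasi cross is `x ↦ 𝟙_A (x i) - 𝟙_B (x j)`. A function `x ↦ φ (x k)` of a single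
coordinate has neighbour sum `λ₁ φ (x k) + ∑ a, φ a`: the `n - 1` other coordinates each
contribute `(q - 1) φ (x k)`, and changing coordinate `k` contributes `∑ a, φ a - φ (x k)`.
Hence the neighbour sum of the quasi cross is `λ₁ f + (|A| - |B|)`. -/

lemma hammingDist_eq_one_iff_exists_update {ι β : Type*} [Fintype ι] [DecidableEq ι]
    [DecidableEq β] {x y : ι → β} :
    hammingDist x y = 1 ↔ ∃ k, ∃ a ≠ x k, y = update x k a := by
  rw [hammingDist, card_eq_one]
  constructor
  · rintro ⟨k, hk⟩
    have hdiff (l : ι) : x l ≠ y l ↔ l = k := by simpa using congr(l ∈ $hk)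
    refine ⟨k, y k, fun h => (hdiff k).2 rfl h.symm, funext fun l => ?_⟩
    by_cases hl : l = k
    · subst hl; simp
    · rw [update_of_ne hl]; exact (not_not.1 (mt (hdiff l).1 hl)).symm
  · rintro ⟨k, a, ha, rfl⟩
    refine ⟨k, ext fun l => ?_⟩
    by_cases hl : l = k
    · subst hl; simpa using Ne.symm ha
    · simp [hl]

section Hamming

variable {n : ℕ} {𝒜 : Type*} [DecidableEq 𝒜]

lemma hammingGraph_adj_iff {x y : Fin n → 𝒜} :
    (hammingGraph n 𝒜).Adj x y ↔ ∃ k, ∃ a ≠ x k, y = update x k a :=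
  hammingDist_eq_one_iff_exists_update

variable [Fintype 𝒜]

lemma sum_indicator_neighborSet_hammingGraph (f : (Fin n → 𝒜) → ℝ) (x : Fin n → 𝒜) :
    ∑ y, ((hammingGraph n 𝒜).neighborSet x).indicator f y =
      ∑ k, (∑ a, f (update x k a) - f x) := by
  classical
  have hneighbors : ∑ y, ((hammingGraph n 𝒜).neighborSet x).indicator f y =
      ∑ y ∈ univ.filter ((hammingGraph n 𝒜).Adj x), f y := by
    rw [sum_filter]; rfl
  have hupdates : ∑ k, (∑ a, f (update x k a) - f x) =
      ∑ p ∈ univ.sigma fun k => univ.erase (x k), f (update x p.1 p.2) := by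
    rw [sum_sigma]
    refine sum_congr rfl fun k _ => ?_
    rw [sum_erase_eq_sub (mem_univ _), update_eq_self]
  rw [hneighbors, hupdates]
  symm
  refine sum_nbij (fun p => update x p.1 p.2) ?_ ?_ ?_ fun _ _ => rfl
  · rintro ⟨k, a⟩ hka
    simp only [mem_sigma, mem_erase] at hka
    simpa using hammingGraph_adj_iff.2 ⟨k, a, hka.2.1, rfl⟩
  · rintro ⟨k, a⟩ hka ⟨l, b⟩ - hupdate
    simp only [coe_sigma, Set.mem_sigma_iff, coe_erase, Set.mem_sdiff, Set.mem_singleton_iff]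
      at hka
    have hk := congrFun hupdate k
    by_cases hkl : k = l
    · subst hkl
      simp_all
    · simp [update_of_ne hkl] at hk
      exact absurd hk hka.2.2
  · intro y hy
    obtain ⟨k, a, ha, rfl⟩ := hammingGraph_adj_iff.1 (mem_filter.1 hy).2
    exact ⟨⟨k, a⟩, by simp [ha], rfl⟩

lemma sum_indicator_neighborSet_hammingGraph_eval (φ : 𝒜 → ℝ) (k : Fin n) (x : Fin n → 𝒜) :
    ∑ y, ((hammingGraph n 𝒜).neighborSet x).indicator (fun y => φ (y k)) y =
      ((Fintype.card 𝒜 - 1) * n - Fintype.card 𝒜) * φ (x k) + ∑ a, φ a := by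
  have hother (l : Fin n) (hl : l ≠ k) :
      ∑ a, φ (update x l a k) - φ (x k) = (Fintype.card 𝒜 - 1) * φ (x k) := by
    simp only [update_of_ne hl.symm, sum_const, card_univ, nsmul_eq_mul]
    ring
  rw [sum_indicator_neighborSet_hammingGraph, ← add_sum_erase _ _ (mem_univ k),
    sum_congr rfl fun l hl => hother l (ne_of_mem_erase hl)]
  simp only [update_self, sum_const, card_erase_of_mem (mem_univ k), card_univ, Fintype.card_fin,
    nsmul_eq_mul, Nat.cast_pred k.pos]
  ring

end Hamming

lemma sum_indicator_one_eq_ncard {α : Type*} [Fintype α] (s : Set α) :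
    ∑ a, s.indicator (1 : α → ℝ) a = s.ncard := by
  classical
  simp [Set.indicator_apply, Set.ncard_eq_toFinset_card']

lemma quasiCross_apply_eq_sub {n : ℕ} {𝒜 : Type*} (A B : Set 𝒜) (i j : Fin n)
    (x : Fin n → 𝒜) :
    quasiCross A B i j x = A.indicator 1 (x i) - B.indicator 1 (x j) := by
  classical
  by_cases hA : x i ∈ A <;> by_cases hB : x j ∈ B <;> simp [quasiCross, hA, hB]

lemma sum_indicator_neighborSet_quasiCross {n : ℕ} {𝒜 : Type*} [Fintype 𝒜] [DecidableEq 𝒜]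
    (A B : Set 𝒜) (i j : Fin n) (x : Fin n → 𝒜) :
    ∑ y, ((hammingGraph n 𝒜).neighborSet x).indicator (quasiCross A B i j) y =
      ((Fintype.card 𝒜 - 1) * n - Fintype.card 𝒜) * quasiCross A B i j x +
        (A.ncard - B.ncard) := by
  have hcross : quasiCross A B i j =
      (fun y => A.indicator 1 (y i)) - fun y => B.indicator 1 (y j) :=
    funext (quasiCross_apply_eq_sub A B i j)
  rw [hcross, Set.indicator_sub']
  simp only [Pi.sub_apply, sum_sub_distrib, sum_indicator_neighborSet_hammingGraph_eval,
    sum_indicator_one_eq_ncard]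
  ring

lemma isEigenfun_iff_of_forall_sum_eq {V : Type*} [Fintype V] [Nonempty V] {G : SimpleGraph V}
    {lam c : ℝ} {f : V → ℝ} (h : ∀ x, ∑ y, (G.neighborSet x).indicator f y = lam * f x + c) :
    IsEigenfun G lam f ↔ c = 0 := by
  simp only [IsEigenfun, h, add_eq_left, forall_const]

theorem stmt14_general {𝒜 : Type*} [Fintype 𝒜] [DecidableEq 𝒜] (q n : ℕ)
    (hq : Fintype.card 𝒜 = q)
    (i j : Fin n) (A B : Set 𝒜) :
    IsEigenfun (hammingGraph n 𝒜) (((q : ℝ) - 1) * n - q) (quasiCross A B i j) ↔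
      A.ncard = B.ncard := by
  subst hq
  rcases isEmpty_or_nonempty 𝒜 with h𝒜 | h𝒜
  · exact iff_of_true (fun x => isEmptyElim (x i))
      (by simp [Set.eq_empty_of_isEmpty A, Set.eq_empty_of_isEmpty B])
  · rw [isEigenfun_iff_of_forall_sum_eq (sum_indicator_neighborSet_quasiCross A B i j), sub_eq_zero,
      Nat.cast_inj]

/-- For `n ≥ 2`, distinct `i, j ∈ {1,…,n}` and nonempty `A, B ⊆ 𝒜`,
the `(A,B,i,j)`-quasi cross is a `λ₁(n,q)`-eigenfunction of `H(n,q)` iff `|A| = |B|`. -/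
theorem stmt14 {𝒜 : Type*} [Fintype 𝒜] [DecidableEq 𝒜] (q n : ℕ)
    (hq : Fintype.card 𝒜 = q) (hq2 : 2 ≤ q) (hn : 2 ≤ n)
    (i j : Fin n) (hij : i ≠ j) (A B : Set 𝒜) (hA : A.Nonempty) (hB : B.Nonempty) :
    IsEigenfun (hammingGraph n 𝒜) (((q : ℝ) - 1) * n - q) (quasiCross A B i j) ↔
      A.ncard = B.ncard :=
  stmt14_general q n hq i j A B
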